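/- Let D be a graph with a preferable-direction assignment (each alive vertex has a unique preferable outgoing edge direction; dead vertices have none). If a dead vertex d lies in a component containing a repelling edge, and there is a shortest path E₁…E_k from a repelling edge to d with E₁ repelling and E₂,…,E_k not repelling, then the direction of E_i is preferable at α(E_i) for every i ≥ 2; consequently d lies in the forward orbit (under the preferable-direction flow) of the endpoint ω(E₁) of the repelling edge. -/

import Mathlib

/-!
Walk the path backwards from the dead vertex `d`. The last edge `E_k` is not repelling and
its reverse cannot be preferable at `d`, which has no preferable edge at all, so `E_k` itself is
preferable at `α(E_k)`. Inductively, if `E_{i+1}` is preferable at `α(E_{i+1}) = ω(E_i)`, then the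
reverse of `E_i` is not (the path is reduced), so the non-repelling edge `E_i` is preferable at
`α(E_i)`. Hence the flow started at `ω(E₁)` runs along `E₂, …, E_k` and reaches `d`.
-/

/-- A graph given by oriented edges with an involution reversing orientation. -/
structure DGraph where
  V : Type
  E : Type
  src : E → V
  bar : E → E
  bar_involutive : Function.Involutive bar
  bar_ne : ∀ e : E, bar e ≠ e

def DGraph.tgt (D : DGraph) (e : D.E) : D.V := D.src (D.bar e)

/-- Iteration of the preferable-direction flow: an alive vertex moves to the endpoint
of its preferable outgoing edge. -/
def flowIter (D : DGraph) (pref : D.V → Option D.E) : ℕ → D.V → Option D.V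
  | 0, v => some v
  | n + 1, v => (flowIter D pref n v).bind fun u => (pref u).map D.tgt

namespace DGraph

variable (D : DGraph) (pref : D.V → Option D.E)

def IsRepelling (e : D.E) : Prop :=
  pref (D.src e) ≠ some e ∧ pref (D.tgt e) ≠ some (D.bar e)

variable {D pref}

theorem pref_src_eq_of_not_isRepelling {e : D.E} (he : ¬D.IsRepelling pref e)
    (hbar : pref (D.tgt e) ≠ some (D.bar e)) : pref (D.src e) = some e :=
  not_not.mp fun hsrc => he ⟨hsrc, hbar⟩

theorem pref_src_eq_of_reduced_path_to_dead :
    ∀ {l : List D.E}, l.IsChain (fun a b => D.tgt a = D.src b) →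
      l.IsChain (fun a b => b ≠ D.bar a) → (∀ e ∈ l, ¬D.IsRepelling pref e) →
      (∀ e ∈ l.getLast?, pref (D.tgt e) = none) → ∀ e ∈ l, pref (D.src e) = some e
  | [], _, _, _, _ => by simp
  | [a], _, _, hrep, hdead => by
    have hbar : pref (D.tgt a) ≠ some (D.bar a) := by simp [hdead a rfl]
    simpa using pref_src_eq_of_not_isRepelling (hrep a (by simp)) hbar
  | a :: b :: l, hchain, hred, hrep, hdead => by
    rw [List.isChain_cons_cons] at hchain hred
    have htail := pref_src_eq_of_reduced_path_to_dead hchain.2 hred.2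
      (fun e he => hrep e (List.mem_cons_of_mem a he))
      (fun e he => hdead e (by simpa [List.getLast?_cons_cons] using he))
    have hbar : pref (D.tgt a) ≠ some (D.bar a) := by
      rw [hchain.1, htail b List.mem_cons_self]
      exact fun h => hred.1 (Option.some.inj h)
    have ha := pref_src_eq_of_not_isRepelling (hrep a List.mem_cons_self) hbar
    simpa [ha] using htail

end DGraph

section Flow

variable {D : DGraph} {pref : D.V → Option D.E}

theorem flowIter_succ_of_pref_eq {v : D.V} {e : D.E}
    (he : pref v = some e) : ∀ n, flowIter D pref (n + 1) v = flowIter D pref n (D.tgt e)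
  | 0 => by simp [flowIter, he]
  | n + 1 => by rw [flowIter, flowIter_succ_of_pref_eq he n, flowIter]

theorem flowIter_length_of_pref_along_path :
    ∀ {a : D.E} {l : List D.E}, (a :: l).IsChain (fun a b => D.tgt a = D.src b) →
      (∀ e ∈ l, pref (D.src e) = some e) →
      flowIter D pref l.length (D.tgt a) = some (D.tgt ((a :: l).getLast (List.cons_ne_nil a l)))
  | _, [], _, _ => rfl
  | a, b :: l, hchain, hpref => by
    rw [List.isChain_cons_cons] at hchain
    rw [List.length_cons, hchain.1, flowIter_succ_of_pref_eq (hpref b List.mem_cons_self),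
      flowIter_length_of_pref_along_path hchain.2 (fun e he => hpref e (List.mem_cons_of_mem b he)),
      List.getLast_cons_cons]

end Flow

theorem dead_vertex_in_flow_orbit_general (D : DGraph) (pref : D.V → Option D.E)
    (es : List D.E) (hne : es ≠ [])
    (hchain : List.Chain' (fun a b => D.tgt a = D.src b) es)
    (hred : List.Chain' (fun a b => b ≠ D.bar a) es)
    (hrest : ∀ (i : ℕ) (h : i < es.length), 1 ≤ i →
      ¬(pref (D.src (es.get ⟨i, h⟩)) ≠ some (es.get ⟨i, h⟩) ∧
        pref (D.tgt (es.get ⟨i, h⟩)) ≠ some (D.bar (es.get ⟨i, h⟩))))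
    (d : D.V) (hd : d = D.tgt (es.getLast hne)) (hdead : pref d = none) :
    (∀ (i : ℕ) (h : i < es.length), 1 ≤ i →
      pref (D.src (es.get ⟨i, h⟩)) = some (es.get ⟨i, h⟩)) ∧
    ∃ n : ℕ, flowIter D pref n (D.tgt (es.head hne)) = some d := by
  obtain ⟨a, l, rfl⟩ := List.exists_cons_of_ne_nil hne
  have hchain : (a :: l).IsChain (fun a b => D.tgt a = D.src b) := hchain
  have hrep : ∀ e ∈ l, ¬D.IsRepelling pref e := by
    intro e he
    obtain ⟨i, hi, rfl⟩ := List.getElem_of_mem he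
    exact hrest (i + 1) (by simpa using hi) (by omega)
  have hlast_dead : ∀ e ∈ l.getLast?, pref (D.tgt e) = none := by
    intro e he
    rw [Option.mem_def, List.getLast?_eq_some_iff] at he
    obtain ⟨l', rfl⟩ := he
    simpa [hd] using hdead
  have hpref := DGraph.pref_src_eq_of_reduced_path_to_dead hchain.tail hred.tail hrep hlast_dead
  refine ⟨fun i hi hi1 => ?_, l.length, ?_⟩
  · obtain ⟨j, rfl⟩ := Nat.exists_eq_add_of_le' hi1
    exact hpref _ (List.getElem_mem _)
  · rw [hd]
    exact flowIter_length_of_pref_along_path hchain hpref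

/-- Lemma 7.4: if a reduced path `E₁ ⋯ E_k` ends at a dead vertex `d`, the edge `E₁`
is repelling, and `E₂, …, E_k` are not repelling, then each `E_i` (`i ≥ 2`) carries
the preferable direction at its initial vertex; consequently `d` lies in the forward
orbit of `ω(E₁)` under the preferable-direction flow. -/
theorem dead_vertex_in_flow_orbit (D : DGraph) (pref : D.V → Option D.E)
    (hpref : ∀ (v : D.V) (e : D.E), pref v = some e → D.src e = v)
    (es : List D.E) (hne : es ≠ [])
    (hchain : List.Chain' (fun a b => D.tgt a = D.src b) es)
    (hred : List.Chain' (fun a b => b ≠ D.bar a) es)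
    (hrep1 : ∀ a : D.E, es.head? = some a →
      pref (D.src a) ≠ some a ∧ pref (D.tgt a) ≠ some (D.bar a))
    (hrest : ∀ (i : ℕ) (h : i < es.length), 1 ≤ i →
      ¬(pref (D.src (es.get ⟨i, h⟩)) ≠ some (es.get ⟨i, h⟩) ∧
        pref (D.tgt (es.get ⟨i, h⟩)) ≠ some (D.bar (es.get ⟨i, h⟩))))
    (d : D.V) (hd : d = D.tgt (es.getLast hne)) (hdead : pref d = none) :
    (∀ (i : ℕ) (h : i < es.length), 1 ≤ i →
      pref (D.src (es.get ⟨i, h⟩)) = some (es.get ⟨i, h⟩)) ∧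
    ∃ n : ℕ, flowIter D pref n (D.tgt (es.head hne)) = some d :=
  dead_vertex_in_flow_orbit_general D pref es hne hchain hred hrest d hd hdead
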